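/- arXiv:1703.09619 — 2 statements merged into one kernel-verified Lean document; each statement's English description precedes it below -/
import Mathlib

section
/- For all natural numbers m₁ and m₂ with m₁ + m₂ even, and for every real x with x ≠ ±1, U_{m₁}(x)·U_{m₂}(x) = T^{ns}_{|m₁−m₂|}(x) − T^{ns}_{m₁+m₂+2}(x), where T^{ns}_n(x) = (T_n(x)−1)/(2(1−x²)) for even n. -/
/-!
Multiplying by `2 (1 - x²)` clears the denominators, and the claim becomes the polynomial identity
`2 (1 - X²) U_m U_k = T_{m-k} - T_{m+k+2}`, valid for all integers `m, k` over any commutative ring.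
For fixed `m` both sides satisfy the Chebyshev recurrence `a (k + 2) = 2 X a (k + 1) - a k` in `k`,
and they agree at `k = -1` (both vanish) and at `k = 0`, so they agree for every `k`.
-/

open Polynomial Polynomial.Chebyshev

/-- Nonsingular Chebyshev function for even index. -/
noncomputable def TnsEven (n : ℤ) (x : ℝ) : ℝ :=
  ((T ℝ n).eval x - 1) / (2 * (1 - x ^ 2))

theorem eq_zero_of_chebyshev_recurrence {R : Type*} [Ring R] (c : R) {a : ℤ → R}
    (hrec : ∀ n, a (n + 2) = c * a (n + 1) - a n) (h₀ : a 0 = 0) (hneg : a (-1) = 0) :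
    a = 0 := by
  have up (n : ℤ) (h : a n = 0) (h' : a (n - 1) = 0) : a (n + 1) = 0 := by
    have := hrec (n - 1)
    rwa [show n - 1 + 2 = n + 1 by ring, sub_add_cancel, h, h', mul_zero, sub_zero] at this
  have down (n : ℤ) (h : a n = 0) (h' : a (n - 1) = 0) : a (n - 2) = 0 := by
    have := hrec (n - 2)
    rw [show n - 2 + 2 = n by ring, show n - 2 + 1 = n - 1 by ring, h, h'] at this
    simpa using this.symm
  suffices h : ∀ n, a n = 0 ∧ a (n - 1) = 0 from funext fun n => (h n).1
  intro n
  induction n using Int.induction_on with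
  | zero => exact ⟨h₀, hneg⟩
  | succ n ih => exact ⟨up n ih.1 ih.2, by simpa using ih.1⟩
  | pred n ih =>
    refine ⟨ih.2, ?_⟩
    rw [show -(n : ℤ) - 1 - 1 = -n - 2 by ring]
    exact down _ ih.1 ih.2

namespace Polynomial.Chebyshev

variable (R : Type*) [CommRing R]

theorem two_mul_one_sub_X_sq_mul_U (n : ℤ) :
    2 * (1 - X ^ 2) * U R n = T R n - T R (n + 2) := by
  linear_combination 2 * one_sub_X_sq_mul_U_eq_pol_in_T R n - T_add_two R n

theorem two_mul_one_sub_X_sq_mul_U_mul_U (m k : ℤ) :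
    2 * (1 - X ^ 2) * U R m * U R k = T R (m - k) - T R (m + k + 2) := by
  set a : ℤ → R[X] := fun k => 2 * (1 - X ^ 2) * U R m * U R k - (T R (m - k) - T R (m + k + 2))
  suffices a = 0 from sub_eq_zero.1 (congrFun this k)
  refine eq_zero_of_chebyshev_recurrence (2 * X) (fun n => ?_) ?_ ?_
  · simp only [a]
    linear_combination (norm := ring_nf) 2 * (1 - (X : R[X]) ^ 2) * U R m * U_add_two R n
      - T_sub_one R (m - n - 1) + T_add_two R (m + n + 2)
  · simpa [a, sub_eq_zero] using two_mul_one_sub_X_sq_mul_U R m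
  · simp only [a, U_neg_one, mul_zero, zero_sub, neg_eq_zero, sub_eq_zero]
    ring_nf

end Polynomial.Chebyshev

theorem U_product_eq_Tns_even_general (m₁ m₂ : ℕ) (x : ℝ)
    (hx1 : x ≠ 1) (hx2 : x ≠ -1) :
    (U ℝ m₁).eval x * (U ℝ m₂).eval x =
      TnsEven |(m₁ : ℤ) - m₂| x - TnsEven ((m₁ : ℤ) + m₂ + 2) x := by
  have hden : (2 : ℝ) * (1 - x ^ 2) ≠ 0 :=
    mul_ne_zero two_ne_zero (sub_ne_zero.2 fun h => (sq_eq_one_iff.1 h.symm).elim hx1 hx2)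
  have key := congrArg (eval x) (two_mul_one_sub_X_sq_mul_U_mul_U ℝ m₁ m₂)
  simp only [eval_sub, eval_mul, eval_pow, eval_ofNat, eval_one, eval_X] at key
  rw [TnsEven, TnsEven, Int.abs_eq_natAbs, T_natAbs, div_sub_div_same, eq_div_iff hden]
  linear_combination key

theorem U_product_eq_Tns_even (m₁ m₂ : ℕ) (h : Even (m₁ + m₂)) (x : ℝ)
    (hx1 : x ≠ 1) (hx2 : x ≠ -1) :
    (U ℝ m₁).eval x * (U ℝ m₂).eval x =
      TnsEven |(m₁ : ℤ) - m₂| x - TnsEven ((m₁ : ℤ) + m₂ + 2) x :=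
  U_product_eq_Tns_even_general m₁ m₂ x hx1 hx2
end

section
/- For any natural numbers m₁, m₂, the product U_{m₁}(x)·U_{m₂}(x), as a polynomial, equals the sum ∑_{j=0}^{min(m₁,m₂)} U_{m₁+m₂−2j}(x) (the Clebsch–Gordan-type linearization of Chebyshev polynomials of the second kind). -/
/-!
For all integers `j, k` one has `U_j U_k - U_{j-1} U_{k+1} = U_{k-j}`: both sides satisfy the
Chebyshev recurrence in `j` and agree at `j = 0, 1`. Taking `k = m + n - j`, the left side is
the increment of `j ↦ U_{j-1} U_{m+n+1-j}`, so `∑_{j ≤ m} U_{m+n-2j}` telescopes to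
`U_m U_n - U_{-1} U_{n+1} = U_m U_n`.
-/

open Polynomial Polynomial.Chebyshev

namespace Polynomial.Chebyshev

variable (R : Type*) [CommRing R]

theorem U_mul_U_sub_U_mul_U (m k : ℤ) :
    U R m * U R k - U R (m - 1) * U R (k + 1) = U R (k - m) := by
  induction m using Polynomial.Chebyshev.induct with
  | zero => simp [U_neg_one]
  | one => rw [sub_self, U_zero, U_one, U_sub_one]; ring
  | add_two m ih1 ih2 =>
    have h₁ := U_add_two R m
    have h₂ := U_sub_two R (k - m)
    have h₃ := U_add_one R m
    linear_combination (norm := ring_nf)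
      U R k * h₁ - U R (k + 1) * h₃ - h₂ + 2 * (X : R[X]) * ih1 - ih2
  | neg_add_one m ih1 ih2 =>
    have h₁ := U_sub_one R (-m)
    have h₂ := U_add_one R (k + m)
    have h₃ := U_sub_one R (-m - 1)
    linear_combination (norm := ring_nf)
      U R k * h₁ - U R (k + 1) * h₃ - h₂ + 2 * (X : R[X]) * ih1 - ih2

theorem U_mul_U_eq_sum_range (m : ℕ) (n : ℤ) :
    U R m * U R n = ∑ j ∈ Finset.range (m + 1), U R (m + n - 2 * j) := by
  set g : ℕ → R[X] := fun j => U R ((j : ℤ) - 1) * U R (m + n + 1 - j)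
  have g_succ_sub (j : ℕ) : g (j + 1) - g j = U R (m + n - 2 * j) := by
    rw [show (m + n - 2 * j : ℤ) = m + n - j - j by ring, ← U_mul_U_sub_U_mul_U]
    simp only [g]
    push_cast
    ring_nf
  calc U R m * U R n = g (m + 1) - g 0 := by simp [g, U_neg_one]
    _ = _ := by rw [← Finset.sum_range_sub, Finset.sum_congr rfl fun j _ => g_succ_sub j]

end Polynomial.Chebyshev

theorem U_mul_U_eq_sum (m₁ m₂ : ℕ) :
    U ℝ m₁ * U ℝ m₂ =
      ∑ j ∈ Finset.range (min m₁ m₂ + 1), U ℝ ((m₁ : ℤ) + m₂ - 2 * j) := by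
  rcases le_total m₁ m₂ with h | h
  · rw [min_eq_left h, U_mul_U_eq_sum_range]
  · rw [min_eq_right h, mul_comm, U_mul_U_eq_sum_range]
    simp only [add_comm]
end
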